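/- Let Γ₁, Γ₂ be groups together with injective homomorphisms ι₁ : Σ → Γ₁ and ι₂ : Σ → Γ₂ from a group Σ, let Γ = Γ₁ *_Σ Γ₂ be the amalgamated free product, and identify Γ₁, Γ₂ and Σ with their images in Γ. Let b : Γ → ℓ²_ℝ(Γ/Σ) be the unique 1-cocycle for the left translation representation λ satisfying b(g) = 0 for all g ∈ Γ₁ and b(h) = δ_{Σ} − δ_{hΣ} for all h ∈ Γ₂. Then b vanishes on Σ, and if the amalgamated free product is nontrivial, i.e. there exist g₀ ∈ Γ₁ ∖ Σ and h₀ ∈ Γ₂ ∖ Σ, then ‖b((h₀g₀)ⁿ)‖² = 2n for every n ≥ 1; in particular the cocycle b is unbounded. -/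

import Mathlib

open scoped RealInnerProductSpace Classical

noncomputable section

universe u

/-- The two-element family of groups `Γ₁, Γ₂`, indexed by `Bool`. -/
def AmalgFam (G₁ G₂ : Type u) : Bool → Type u
  | true => G₁
  | false => G₂

instance AmalgFam.instGroup {G₁ G₂ : Type u} [Group G₁] [Group G₂] :
    ∀ i, Group (AmalgFam G₁ G₂ i)
  | true => inferInstanceAs (Group G₁)
  | false => inferInstanceAs (Group G₂)

variable {K G₁ G₂ : Type u} [Group K] [Group G₁] [Group G₂]

/-- The pair of maps `ι₁ : K → Γ₁`, `ι₂ : K → Γ₂` as a family indexed by `Bool`. -/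
def amalgMaps (ι₁ : K →* G₁) (ι₂ : K →* G₂) : ∀ i, K →* AmalgFam G₁ G₂ i
  | true => ι₁
  | false => ι₂

/-- The amalgamated free product `Γ₁ *_K Γ₂`, as the pushout of `ι₁` and `ι₂`. -/
abbrev Amalg (ι₁ : K →* G₁) (ι₂ : K →* G₂) : Type u :=
  Monoid.PushoutI (amalgMaps ι₁ ι₂)

/-- The canonical map `Γ₁ → Γ₁ *_K Γ₂`. -/
abbrev Amalg.inl (ι₁ : K →* G₁) (ι₂ : K →* G₂) : G₁ →* Amalg ι₁ ι₂ :=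
  Monoid.PushoutI.of (φ := amalgMaps ι₁ ι₂) true

/-- The canonical map `Γ₂ → Γ₁ *_K Γ₂`. -/
abbrev Amalg.inr (ι₁ : K →* G₁) (ι₂ : K →* G₂) : G₂ →* Amalg ι₁ ι₂ :=
  Monoid.PushoutI.of (φ := amalgMaps ι₁ ι₂) false

/-- The copy of `Σ = K` inside `Γ₁ *_K Γ₂`. -/
abbrev Amalg.sigma (ι₁ : K →* G₁) (ι₂ : K →* G₂) : Subgroup (Amalg ι₁ ι₂) :=
  (Monoid.PushoutI.base (amalgMaps ι₁ ι₂)).range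

/-- The coset space `Γ/Σ`. -/
abbrev Amalg.coset (ι₁ : K →* G₁) (ι₂ : K →* G₂) : Type u :=
  Amalg ι₁ ι₂ ⧸ Amalg.sigma ι₁ ι₂

/-- The real Hilbert space `ℓ²_ℝ(Γ/Σ)`. -/
abbrev Amalg.l2 (ι₁ : K →* G₁) (ι₂ : K →* G₂) : Type u :=
  lp (fun _ : Amalg.coset ι₁ ι₂ => ℝ) 2


set_option linter.unusedSectionVars false

open Monoid Monoid.PushoutI

section AuxWords

variable {ι : Type*} {G : ι → Type*} [∀ i, Group (G i)] {H : Type*} [Group H] {φ : ∀ i, H →* G i}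

/-- Alternating list of letters. -/
def altL (a b : (i : ι) × G i) : ℕ → List ((i : ι) × G i)
  | 0 => []
  | m + 1 => a :: b :: altL a b m

theorem altL_mem (a b : (i : ι) × G i) (m : ℕ) : ∀ p ∈ altL a b m, p = a ∨ p = b := by
  induction m with
  | zero => simp [altL]
  | succ m ih =>
    intro p hp
    rw [altL] at hp
    rcases List.mem_cons.1 hp with rfl | hp
    · exact Or.inl rfl
    rcases List.mem_cons.1 hp with rfl | hp
    · exact Or.inr rfl
    exact ih p hp

theorem altL_chain_cons (a b : (i : ι) × G i) (hab : a.1 ≠ b.1) :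
    ∀ (m : ℕ) (x : (i : ι) × G i), x.1 ≠ a.1 →
      (x :: altL a b m).Chain' (fun p q => p.1 ≠ q.1) := by
  intro m
  induction m with
  | zero => intro x _; simp [altL]; exact List.isChain_singleton _
  | succ m ih =>
    intro x hxa
    exact List.isChain_cons_cons.2 ⟨hxa, List.isChain_cons_cons.2 ⟨hab, ih b hab.symm⟩⟩

theorem altL_chain (a b : (i : ι) × G i) (hab : a.1 ≠ b.1) (m : ℕ) :
    (altL a b m).Chain' (fun p q => p.1 ≠ q.1) := by
  cases m with
  | zero => simp [altL]; exact List.isChain_nil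
  | succ m => exact List.isChain_cons_cons.2 ⟨hab, altL_chain_cons a b hab m b hab.symm⟩

theorem altL_prod (a b : (i : ι) × G i) (m : ℕ) :
    ((altL a b m).map fun p => of (φ := φ) p.1 p.2).prod
      = (of (φ := φ) a.1 a.2 * of (φ := φ) b.1 b.2) ^ m := by
  induction m with
  | zero => simp [altL]
  | succ m ih => simp [altL, ih, pow_succ', mul_assoc]

theorem prod_notin_base (hφ : ∀ i, Function.Injective (φ i)) (l : List ((i : ι) × G i))
    (hne : l ≠ []) (hch : l.Chain' fun p q => p.1 ≠ q.1)
    (hr : ∀ p ∈ l, p.2 ∉ (φ p.1).range) :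
    (l.map fun p => of (φ := φ) p.1 p.2).prod ∉ (base φ).range := by
  intro hmem
  have hne1 : ∀ p ∈ l, p.2 ≠ (1 : G p.1) := fun p hp h1 => hr p hp (h1 ▸ one_mem _)
  let w : CoprodI.Word G := ⟨l, hne1, hch⟩
  have hred : Reduced φ w := fun p hp => hr p hp
  have hprod : ofCoprodI (w.prod) = (l.map fun p => of (φ := φ) p.1 p.2).prod := by
    simp [CoprodI.Word.prod, map_list_prod, List.map_map, Function.comp_def, ofCoprodI_of]
    rfl
  have hempty := hred.eq_empty_of_mem_range hφ (by rw [hprod]; exact hmem)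
  apply hne
  simpa [CoprodI.Word.empty] using congrArg CoprodI.Word.toList hempty

end AuxWords

section AmalgFacts

variable {K G₁ G₂ : Type u} [Group K] [Group G₁] [Group G₂]

open Monoid Monoid.PushoutI

theorem amalg_facts (ι₁ : K →* G₁) (ι₂ : K →* G₂)
    (hι₁ : Function.Injective ι₁) (hι₂ : Function.Injective ι₂)
    {g₀ : G₁} (hg : g₀ ∉ MonoidHom.range ι₁) {h₀ : G₂} (hh : h₀ ∉ MonoidHom.range ι₂) :
    (∀ m : ℕ, 1 ≤ m →
        (Amalg.inr ι₁ ι₂ h₀ * Amalg.inl ι₁ ι₂ g₀) ^ m ∉ Amalg.sigma ι₁ ι₂) ∧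
    (∀ m : ℕ,
        (Amalg.inr ι₁ ι₂ h₀ * Amalg.inl ι₁ ι₂ g₀) ^ m * Amalg.inr ι₁ ι₂ h₀ ∉
          Amalg.sigma ι₁ ι₂) ∧
    (∀ m : ℕ, 1 ≤ m →
        (Amalg.inr ι₁ ι₂ h₀)⁻¹ * (Amalg.inr ι₁ ι₂ h₀ * Amalg.inl ι₁ ι₂ g₀) ^ m ∉
          Amalg.sigma ι₁ ι₂) ∧
    (∀ m : ℕ, 1 ≤ m →
        (Amalg.inr ι₁ ι₂ h₀)⁻¹ * (Amalg.inr ι₁ ι₂ h₀ * Amalg.inl ι₁ ι₂ g₀) ^ m *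
          Amalg.inr ι₁ ι₂ h₀ ∉ Amalg.sigma ι₁ ι₂) := by
  have hφ : ∀ i, Function.Injective (amalgMaps ι₁ ι₂ i) := by
    intro i; cases i
    · exact hι₂
    · exact hι₁
  set lH : (i : Bool) × AmalgFam G₁ G₂ i := ⟨false, h₀⟩ with hlH
  set lG : (i : Bool) × AmalgFam G₁ G₂ i := ⟨true, g₀⟩ with hlG
  have hne : lH.1 ≠ lG.1 := by simp [hlH, hlG]
  have hrG : ∀ (m : ℕ) p, p ∈ altL lG lH m → p.2 ∉ (amalgMaps ι₁ ι₂ p.1).range := by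
    intro m p hp
    rcases altL_mem lG lH m p hp with rfl | rfl
    · exact hg
    · exact hh
  have hrH : ∀ (m : ℕ) p, p ∈ altL lH lG m → p.2 ∉ (amalgMaps ι₁ ι₂ p.1).range := by
    intro m p hp
    rcases altL_mem lH lG m p hp with rfl | rfl
    · exact hh
    · exact hg
  have hofH : of (φ := amalgMaps ι₁ ι₂) lH.1 lH.2 = Amalg.inr ι₁ ι₂ h₀ := rfl
  have hofG : of (φ := amalgMaps ι₁ ι₂) lG.1 lG.2 = Amalg.inl ι₁ ι₂ g₀ := rfl
  set h : Amalg ι₁ ι₂ := Amalg.inr ι₁ ι₂ h₀ with hh'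
  set g : Amalg ι₁ ι₂ := Amalg.inl ι₁ ι₂ g₀ with hg'
  refine ⟨?_, ?_, ?_, ?_⟩
  · -- (h*g)^m ∉ Σ
    rintro m hm
    obtain ⟨m, rfl⟩ := Nat.exists_eq_add_of_le hm
    have := prod_notin_base hφ (altL lH lG (1 + m)) (by rw [Nat.add_comm]; simp [altL]) (altL_chain _ _ hne _)
      (hrH _)
    rwa [altL_prod, hofH, hofG] at this
  · -- (h*g)^m * h ∉ Σ
    intro m
    have := prod_notin_base hφ (lH :: altL lG lH m) (by simp)
      (altL_chain_cons lG lH hne.symm m lH hne) (by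
        intro p hp
        rcases List.mem_cons.1 hp with rfl | hp
        · exact hh
        · exact hrG m p hp)
    rw [List.map_cons, List.prod_cons, altL_prod, hofH, hofG] at this
    have hid : (h * g) ^ m * h = h * (g * h) ^ m := by
      have := conj_pow (i := m) (a := h) (b := g * h)
      rw [show h * (g * h) * h⁻¹ = h * g by group] at this
      rw [this]; group
    rwa [hid]
  · -- h⁻¹ * (h*g)^m ∉ Σ
    rintro m hm
    obtain ⟨m, rfl⟩ := Nat.exists_eq_add_of_le hm
    have := prod_notin_base hφ (lG :: altL lH lG m) (by simp)
      (altL_chain_cons lH lG hne m lG hne.symm) (by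
        intro p hp
        rcases List.mem_cons.1 hp with rfl | hp
        · exact hg
        · exact hrH m p hp)
    rw [List.map_cons, List.prod_cons, altL_prod, hofH, hofG] at this
    have hid : h⁻¹ * (h * g) ^ (1 + m) = g * (h * g) ^ m := by
      rw [add_comm, pow_succ', ← mul_assoc, ← mul_assoc, inv_mul_cancel, one_mul]
    rwa [hid]
  · -- h⁻¹ * (h*g)^m * h ∉ Σ
    rintro m hm
    obtain ⟨m, rfl⟩ := Nat.exists_eq_add_of_le hm
    have := prod_notin_base hφ (altL lG lH (1 + m)) (by rw [Nat.add_comm]; simp [altL])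
      (altL_chain _ _ hne.symm _) (hrG _)
    rw [altL_prod, hofG, hofH] at this
    have hid : h⁻¹ * (h * g) ^ (1 + m) * h = (g * h) ^ (1 + m) := by
      have := conj_pow (i := 1 + m) (a := h⁻¹) (b := h * g)
      rw [show h⁻¹ * (h * g) * h⁻¹⁻¹ = g * h by group] at this
      rw [this]; group
    rwa [hid]

end AmalgFacts

section MainAux

variable {K G₁ G₂ : Type u} [Group K] [Group G₁] [Group G₂]

theorem aux_main (ι₁ : K →* G₁) (ι₂ : K →* G₂)
    (lam : Amalg ι₁ ι₂ →* (Amalg.l2 ι₁ ι₂ ≃ₗᵢ[ℝ] Amalg.l2 ι₁ ι₂))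
    (hlam : ∀ (g : Amalg ι₁ ι₂) (ξ : Amalg.l2 ι₁ ι₂) (x : Amalg.coset ι₁ ι₂),
      (lam g ξ) x = ξ (g⁻¹ • x))
    (b : Amalg ι₁ ι₂ → Amalg.l2 ι₁ ι₂)
    (hcocycle : ∀ g h : Amalg ι₁ ι₂, b (g * h) = b g + lam g (b h))
    (h g : Amalg ι₁ ι₂)
    (hb1 : b 1 = 0)
    (hbg : b g = 0)
    (hbh : b h = lp.single 2 (QuotientGroup.mk (1 : Amalg ι₁ ι₂)) 1
      - lp.single 2 (QuotientGroup.mk h) 1)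
    (F1 : ∀ m : ℕ, 1 ≤ m → (h * g) ^ m ∉ Amalg.sigma ι₁ ι₂)
    (F2 : ∀ m : ℕ, (h * g) ^ m * h ∉ Amalg.sigma ι₁ ι₂)
    (F3 : ∀ m : ℕ, 1 ≤ m → h⁻¹ * (h * g) ^ m ∉ Amalg.sigma ι₁ ι₂)
    (F4 : ∀ m : ℕ, 1 ≤ m → h⁻¹ * (h * g) ^ m * h ∉ Amalg.sigma ι₁ ι₂) :
    ∀ n : ℕ, ‖b ((h * g) ^ n)‖ ^ 2 = 2 * (n : ℝ) := by
  have lam_single : ∀ (γ : Amalg ι₁ ι₂) (z : Amalg.coset ι₁ ι₂),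
      lam γ (lp.single 2 z (1 : ℝ)) = lp.single 2 (γ • z) (1 : ℝ) := by
    intro γ z
    apply lp.ext
    funext u
    rw [hlam]
    by_cases hu : u = γ • z
    · subst hu
      rw [inv_smul_smul, lp.single_apply_self, lp.single_apply_self]
    · rw [lp.single_apply_ne (E := fun _ : Amalg.coset ι₁ ι₂ => ℝ) 2 (γ • z) 1 hu,
        lp.single_apply_ne (E := fun _ : Amalg.coset ι₁ ι₂ => ℝ) 2 z 1]
      intro hz
      exact hu (by rw [← hz, smul_inv_smul])
  have hbw : b (h * g) = lp.single 2 (QuotientGroup.mk (1 : Amalg ι₁ ι₂)) 1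
      - lp.single 2 (QuotientGroup.mk h) 1 := by
    rw [hcocycle, hbg, map_zero, add_zero, hbh]
  have key : ∀ n : ℕ, b ((h * g) ^ n) =
      ∑ k ∈ Finset.range n,
        (lp.single 2 (QuotientGroup.mk ((h * g) ^ k)) 1
          - lp.single 2 (QuotientGroup.mk ((h * g) ^ k * h)) 1) := by
    intro n
    induction n with
    | zero => simp [hb1]
    | succ n ih =>
      rw [pow_succ, hcocycle, ih, hbw, map_sub, lam_single, lam_single,
        Finset.sum_range_succ]
      have e1 : ((h * g) ^ n) • (QuotientGroup.mk (1 : Amalg ι₁ ι₂) : Amalg.coset ι₁ ι₂)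
          = QuotientGroup.mk ((h * g) ^ n) := by
        show (QuotientGroup.mk ((h * g) ^ n * 1) : Amalg.coset ι₁ ι₂) = _
        rw [mul_one]
      have e2 : ((h * g) ^ n) • (QuotientGroup.mk h : Amalg.coset ι₁ ι₂)
          = QuotientGroup.mk ((h * g) ^ n * h) := rfl
      rw [e1, e2]
  -- coset distinctness
  have hxx : ∀ k j : ℕ, k < j →
      (QuotientGroup.mk ((h * g) ^ k) : Amalg.coset ι₁ ι₂) ≠ QuotientGroup.mk ((h * g) ^ j) := by
    intro k j hkj he
    obtain ⟨d, rfl⟩ := Nat.exists_eq_add_of_lt hkj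
    have hm := QuotientGroup.eq.1 he
    refine F1 (d + 1) (Nat.le_add_left 1 d) ?_
    have e : ((h * g) ^ k)⁻¹ * (h * g) ^ (k + d + 1) = (h * g) ^ (d + 1) := by
      rw [show k + d + 1 = k + (d + 1) from rfl, pow_add, inv_mul_cancel_left]
    rwa [e] at hm
  have hyy : ∀ k j : ℕ, k < j →
      (QuotientGroup.mk ((h * g) ^ k * h) : Amalg.coset ι₁ ι₂) ≠
        QuotientGroup.mk ((h * g) ^ j * h) := by
    intro k j hkj he
    obtain ⟨d, rfl⟩ := Nat.exists_eq_add_of_lt hkj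
    have hm := QuotientGroup.eq.1 he
    refine F4 (d + 1) (Nat.le_add_left 1 d) ?_
    have e : ((h * g) ^ k * h)⁻¹ * ((h * g) ^ (k + d + 1) * h)
        = h⁻¹ * (h * g) ^ (d + 1) * h := by
      rw [show k + d + 1 = k + (d + 1) from rfl]; group
    rwa [e] at hm
  have hxy : ∀ k j : ℕ,
      (QuotientGroup.mk ((h * g) ^ k) : Amalg.coset ι₁ ι₂) ≠
        QuotientGroup.mk ((h * g) ^ j * h) := by
    intro k j he
    rcases le_or_gt k j with hkj | hjk
    · obtain ⟨d, rfl⟩ := Nat.exists_eq_add_of_le hkj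
      have hm := QuotientGroup.eq.1 he
      refine F2 d ?_
      have e : ((h * g) ^ k)⁻¹ * ((h * g) ^ (k + d) * h) = (h * g) ^ d * h := by group
      rwa [e] at hm
    · obtain ⟨d, rfl⟩ := Nat.exists_eq_add_of_lt hjk
      have hm := QuotientGroup.eq.1 he.symm
      refine F3 (d + 1) (Nat.le_add_left 1 d) ?_
      have e : ((h * g) ^ j * h)⁻¹ * (h * g) ^ (j + d + 1)
          = h⁻¹ * (h * g) ^ (d + 1) := by
        rw [show j + d + 1 = j + (d + 1) from rfl]; group
      rwa [e] at hm
  have EE : ∀ a c : Amalg.coset ι₁ ι₂,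
      ⟪(lp.single 2 a 1 : Amalg.l2 ι₁ ι₂), lp.single 2 c 1⟫ = if a = c then (1:ℝ) else 0 := by
    intro a c
    rw [lp.inner_single_left]
    by_cases hac : a = c
    · subst hac; simp [lp.single_apply_self, RCLike.inner_apply]
    · rw [lp.single_apply_ne (E := fun _ : Amalg.coset ι₁ ι₂ => ℝ) 2 c 1 hac]
      simp [RCLike.inner_apply, hac]
  intro n
  have hns := real_inner_self_eq_norm_sq (b ((h * g) ^ n))
  rw [← hns, key n, sum_inner]
  have hterm : ∀ k ∈ Finset.range n, ∀ j ∈ Finset.range n,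
      ⟪(lp.single 2 (QuotientGroup.mk ((h * g) ^ k)) 1 : Amalg.l2 ι₁ ι₂)
          - lp.single 2 (QuotientGroup.mk ((h * g) ^ k * h)) 1,
        lp.single 2 (QuotientGroup.mk ((h * g) ^ j)) 1
          - lp.single 2 (QuotientGroup.mk ((h * g) ^ j * h)) 1⟫
        = if k = j then (2:ℝ) else 0 := by
    intro k _ j _
    rw [inner_sub_left, inner_sub_right, inner_sub_right, EE, EE, EE, EE]
    by_cases hkj : k = j
    · subst hkj
      rw [if_pos rfl, if_pos rfl, if_neg (hxy k k), if_neg (Ne.symm (hxy k k)), if_pos rfl]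
      norm_num
    · rcases lt_or_gt_of_ne hkj with hlt | hgt
      · rw [if_neg (hxx k j hlt), if_neg (hxy k j), if_neg (Ne.symm (hxy j k)),
          if_neg (hyy k j hlt), if_neg hkj]
        norm_num
      · rw [if_neg (Ne.symm (hxx j k hgt)), if_neg (hxy k j), if_neg (Ne.symm (hxy j k)),
          if_neg (Ne.symm (hyy j k hgt)), if_neg hkj]
        norm_num
  calc (∑ k ∈ Finset.range n,
        ⟪(lp.single 2 (QuotientGroup.mk ((h * g) ^ k)) 1 : Amalg.l2 ι₁ ι₂)
            - lp.single 2 (QuotientGroup.mk ((h * g) ^ k * h)) 1,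
          ∑ j ∈ Finset.range n,
            (lp.single 2 (QuotientGroup.mk ((h * g) ^ j)) 1
              - lp.single 2 (QuotientGroup.mk ((h * g) ^ j * h)) 1)⟫)
      = ∑ k ∈ Finset.range n, ∑ j ∈ Finset.range n, (if k = j then (2:ℝ) else 0) := by
        refine Finset.sum_congr rfl fun k hk => ?_
        rw [inner_sum]
        exact Finset.sum_congr rfl fun j hj => hterm k hk j hj
    _ = 2 * (n : ℝ) := by
        simp only [Finset.sum_ite_eq, Finset.mem_range]
        rw [Finset.sum_congr rfl fun x hx => if_pos (Finset.mem_range.1 hx), Finset.sum_const,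
          Finset.card_range, nsmul_eq_mul]
        ring

end MainAux

/-- the canonical 1-cocycle `b` of a nontrivial amalgamated free product
`Γ₁ *_Σ Γ₂` vanishes on `Σ` and satisfies `‖b((h₀g₀)ⁿ)‖² = 2n` for `g₀ ∈ Γ₁ ∖ Σ`,
`h₀ ∈ Γ₂ ∖ Σ`; in particular `b` is unbounded. -/
theorem statement14 (ι₁ : K →* G₁) (ι₂ : K →* G₂)
    (hι₁ : Function.Injective ι₁) (hι₂ : Function.Injective ι₂)
    (lam : Amalg ι₁ ι₂ →* (Amalg.l2 ι₁ ι₂ ≃ₗᵢ[ℝ] Amalg.l2 ι₁ ι₂))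
    (hlam : ∀ (g : Amalg ι₁ ι₂) (ξ : Amalg.l2 ι₁ ι₂) (x : Amalg.coset ι₁ ι₂),
      (lam g ξ) x = ξ (g⁻¹ • x))
    (b : Amalg ι₁ ι₂ → Amalg.l2 ι₁ ι₂)
    (hcocycle : ∀ g h : Amalg ι₁ ι₂, b (g * h) = b g + lam g (b h))
    (hleft : ∀ g : G₁, b (Amalg.inl ι₁ ι₂ g) = 0)
    (hright : ∀ h : G₂, b (Amalg.inr ι₁ ι₂ h) =
      lp.single 2 (QuotientGroup.mk (1 : Amalg ι₁ ι₂)) 1 -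
        lp.single 2 (QuotientGroup.mk (Amalg.inr ι₁ ι₂ h)) 1) :
    (∀ x ∈ Amalg.sigma ι₁ ι₂, b x = 0) ∧
    (∀ g₀ : G₁, g₀ ∉ MonoidHom.range ι₁ → ∀ h₀ : G₂, h₀ ∉ MonoidHom.range ι₂ →
      ∀ n : ℕ, 1 ≤ n →
        ‖b ((Amalg.inr ι₁ ι₂ h₀ * Amalg.inl ι₁ ι₂ g₀) ^ n)‖ ^ 2 = 2 * (n : ℝ)) ∧
    ((∃ g₀ : G₁, g₀ ∉ MonoidHom.range ι₁) → (∃ h₀ : G₂, h₀ ∉ MonoidHom.range ι₂) →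
      ¬ ∃ C : ℝ, ∀ g : Amalg ι₁ ι₂, ‖b g‖ ≤ C) := by
  have hb1 : b 1 = 0 := by
    have := hleft 1
    rwa [map_one] at this
  have main : ∀ g₀ : G₁, g₀ ∉ MonoidHom.range ι₁ → ∀ h₀ : G₂, h₀ ∉ MonoidHom.range ι₂ →
      ∀ n : ℕ, ‖b ((Amalg.inr ι₁ ι₂ h₀ * Amalg.inl ι₁ ι₂ g₀) ^ n)‖ ^ 2 = 2 * (n : ℝ) := by
    intro g₀ hg h₀ hh
    obtain ⟨F1, F2, F3, F4⟩ := amalg_facts ι₁ ι₂ hι₁ hι₂ hg hh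
    exact aux_main ι₁ ι₂ lam hlam b hcocycle _ _ hb1 (hleft g₀) (hright h₀) F1 F2 F3 F4
  refine ⟨?_, ?_, ?_⟩
  · rintro x ⟨k, rfl⟩
    rw [← Monoid.PushoutI.of_apply_eq_base (amalgMaps ι₁ ι₂) true k]
    exact hleft _
  · intro g₀ hg h₀ hh n _
    exact main g₀ hg h₀ hh n
  · rintro ⟨g₀, hg⟩ ⟨h₀, hh⟩ ⟨C, hC⟩
    obtain ⟨n, hn⟩ : ∃ n : ℕ, C ^ 2 < 2 * (n : ℝ) := by
      refine ⟨⌈C ^ 2⌉₊ + 1, ?_⟩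
      have h4 := Nat.le_ceil (C ^ 2)
      push_cast
      nlinarith [Nat.le_ceil (C ^ 2), Nat.cast_nonneg (α := ℝ) ⌈C ^ 2⌉₊]
    have h1 := main g₀ hg h₀ hh n
    have h2 := hC ((Amalg.inr ι₁ ι₂ h₀ * Amalg.inl ι₁ ι₂ g₀) ^ n)
    have h0 : (0:ℝ) ≤ ‖b ((Amalg.inr ι₁ ι₂ h₀ * Amalg.inl ι₁ ι₂ g₀) ^ n)‖ := norm_nonneg _
    nlinarith [h1, h2, h0, hn]
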